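/- Let (X,d,ν) be a weak CD(K,N) space with K>0 and 1<N<∞. Then the diameter of the support of ν is at most π√((N−1)/K). -/

import Mathlib

open Set Filter Topology

variable {X : Type*}

/-- Forward ball of an (possibly asymmetric) distance function. -/
def fwdBall (d : X → X → ℝ) (x : X) (r : ℝ) : Set X := {y | d x y < r}

/-- Backward ball. -/
def bwdBall (d : X → X → ℝ) (x : X) (r : ℝ) : Set X := {y | d y x < r}

/-- The forward topology, generated by forward balls. -/
def fwdTop (d : X → X → ℝ) : TopologicalSpace X :=
  TopologicalSpace.generateFrom {s | ∃ x r, s = fwdBall d x r}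

/-- The backward topology, generated by backward balls. -/
def bwdTop (d : X → X → ℝ) : TopologicalSpace X :=
  TopologicalSpace.generateFrom {s | ∃ x r, s = bwdBall d x r}

/-- `d` is an irreversible metric: nonnegative, vanishing exactly on the diagonal, and
satisfying the triangle inequality (symmetry is not required). -/
def IsIrrevMetric (d : X → X → ℝ) : Prop :=
  (∀ x y, 0 ≤ d x y) ∧ (∀ x y, d x y = 0 ↔ x = y) ∧ ∀ x y z, d x z ≤ d x y + d y z

/-- `(X, star, d)` is a pointed forward `Θ`-metric space: `Θ` is nondecreasing with values ≥ 1
and the reversibility of the closure (in the forward topology) of each forward ball of radius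
`r > 0` about `star` is bounded by `Θ r`. -/
def PointedForwardTheta (d : X → X → ℝ) (star : X) (Θ : ℝ → ℝ) : Prop :=
  Monotone Θ ∧ (∀ r, 1 ≤ Θ r) ∧
  ∀ r > 0, ∀ x ∈ @closure X (fwdTop d) (fwdBall d star r),
    ∀ y ∈ @closure X (fwdTop d) (fwdBall d star r), d x y ≤ Θ r * d y x
open MeasureTheory
open scoped ENNReal

/-- The support of a measure, with respect to the forward topology of `d`. -/
def msupport (d : X → X → ℝ) [MeasurableSpace X] (μ : Measure X) : Set X :=
  {x | ∀ U : Set X, @IsOpen X (fwdTop d) U → x ∈ U → 0 < μ U}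

/-- The total transport cost of a plan `π` for the cost `d(x,y)^p`. -/
noncomputable def transportCost [MeasurableSpace X] (d : X → X → ℝ) (p : ℝ)
    (π : Measure (X × X)) : ℝ≥0∞ :=
  ∫⁻ z, ENNReal.ofReal (d z.1 z.2) ^ p ∂π

/-- `π` is a coupling (transference plan) from `μ` to `ν`. -/
def IsCoupling [MeasurableSpace X] (π : Measure (X × X)) (μ ν : Measure X) : Prop :=
  π.map Prod.fst = μ ∧ π.map Prod.snd = ν

/-- The (possibly asymmetric) `p`-Wasserstein distance from `μ` to `ν`. -/
noncomputable def wassDist [MeasurableSpace X] (d : X → X → ℝ) (p : ℝ)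
    (μ ν : Measure X) : ℝ≥0∞ :=
  (⨅ π : {π : Measure (X × X) // IsCoupling π μ ν}, transportCost d p π.1) ^ (1 / p)

/-- `π` is an optimal transference plan from `μ` to `ν` for the cost `d²`. -/
def IsOptimalCoupling [MeasurableSpace X] (d : X → X → ℝ) (π : Measure (X × X))
    (μ ν : Measure X) : Prop :=
  IsCoupling π μ ν ∧ ∀ π' : Measure (X × X), IsCoupling π' μ ν →
    transportCost d 2 π ≤ transportCost d 2 π'

/-- The positive part of an extended real, as an extended nonnegative real. -/
noncomputable def eposPart (x : EReal) : ℝ≥0∞ := if x = ⊤ then ⊤ else ENNReal.ofReal x.toReal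

/-- Extended-real-valued integral, defined through positive and negative parts. -/
noncomputable def elint {α : Type*} [MeasurableSpace α] (μ : Measure α) (f : α → EReal) :
    EReal :=
  ((∫⁻ a, eposPart (f a) ∂μ : ℝ≥0∞) : EReal) - ((∫⁻ a, eposPart (-f a) ∂μ : ℝ≥0∞) : EReal)

/-- The asymptotic slope `U'(∞) = lim_{r→∞} U(r)/r` of a convex `U` with `U 0 = 0`
(the supremum of the slopes). -/
noncomputable def slopeTop (U : ℝ → ℝ) : EReal :=
  ⨆ r : {r : ℝ // 0 < r}, ((U r.1 / r.1 : ℝ) : EReal)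

/-- The right derivative `U'(0⁺)` of a convex `U` with `U 0 = 0` (the infimum of the
slopes). -/
noncomputable def slopeZero (U : ℝ → ℝ) : EReal :=
  ⨅ r : {r : ℝ // 0 < r}, ((U r.1 / r.1 : ℝ) : EReal)

/-- The integral functional `U_ν(μ) = ∫ U(ρ) dν + U'(∞)·μ_s[X]`, where `μ = ρν + μ_s` is the
Lebesgue decomposition of `μ` with respect to `ν`. -/
noncomputable def Unu [MeasurableSpace X] (U : ℝ → ℝ) (ν μ : Measure X) : EReal :=
  elint ν (fun x => ((U ((μ.rnDeriv ν x).toReal) : ℝ) : EReal)) +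
    slopeTop U * (((μ.singularPart ν) Set.univ : ℝ≥0∞) : EReal)

/-- The distorted integrand `U(ρ/β)·β`, with the convention `U(ρ/∞)·∞ = U'(0⁺)·ρ`. -/
noncomputable def distInt (U : ℝ → ℝ) (ρ : ℝ) (b : ℝ≥0∞) : EReal :=
  if b = ⊤ then slopeZero U * ((ρ : ℝ) : EReal)
  else ((U (ρ / b.toReal) * b.toReal : ℝ) : EReal)

/-- The distorted integral functional
`U^β_{π,ν}(μ) = ∫∫ U(ρ(x)/β(x,y)) β(x,y) π(dy|x) ν(dx) + U'(∞)·μ_s[X]`, where the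
disintegration `π(dy|x)` is given by the kernel `κ` and `ρ = dμ/dν`. -/
noncomputable def Ubeta [MeasurableSpace X] (U : ℝ → ℝ) (β : X → X → ℝ≥0∞)
    (κ : ProbabilityTheory.Kernel X X) (ν μ : Measure X) : EReal :=
  elint ν (fun x => elint (κ x) (fun y => distInt U ((μ.rnDeriv ν x).toReal) (β x y))) +
    slopeTop U * (((μ.singularPart ν) Set.univ : ℝ≥0∞) : EReal)

/-- The comparison function `𝔰_{K,N}`. -/
noncomputable def sKN (K N r : ℝ) : ℝ :=
  if 0 < K then Real.sqrt ((N - 1) / K) * Real.sin (r * Real.sqrt (K / (N - 1)))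
  else if K = 0 then r
  else Real.sqrt ((N - 1) / (-K)) * Real.sinh (r * Real.sqrt ((-K) / (N - 1)))

/-- The distortion coefficients `β^{(K,N)}_t` for `N < ∞`, as a function of the (directed)
distance: `β^{(K,N)}_t = (𝔰_{K,N}(t·dist)/(t·𝔰_{K,N}(dist)))^{N−1}`, equal to `∞` when
`K > 0` and `dist ≥ π√((N−1)/K)`, and equal to `1` for `t = 0` or `dist = 0`. -/
noncomputable def betaKN (K N t dist : ℝ) : ℝ≥0∞ :=
  if t = 0 ∨ dist = 0 then 1
  else if 0 < K ∧ Real.pi * Real.sqrt ((N - 1) / K) ≤ dist then ⊤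
  else ENNReal.ofReal ((sKN K N (t * dist) / (t * sKN K N dist)) ^ (N - 1))

/-- The displacement convexity class `DC_N` for `N < ∞`: continuous convex `U` with
`U(0) = 0`, twice continuously differentiable on `(0,∞)`, such that
`δ ↦ δ^N U(δ^{-N})` is convex on `(0,∞)`. -/
def MemDCN (N : ℝ) (U : ℝ → ℝ) : Prop :=
  ContinuousOn U (Set.Ici 0) ∧ ConvexOn ℝ (Set.Ici 0) U ∧ U 0 = 0 ∧
  ContDiffOn ℝ 2 U (Set.Ioi 0) ∧
  ConvexOn ℝ (Set.Ioi 0) (fun δ : ℝ => δ ^ N * U (δ ^ (-N)))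

/-- The weak curvature-dimension condition `CD(K,N)` (for finite `N`) of
the forward metric-measure space `(X,d,ν)`: for any two compactly supported probability
measures `μ₀, μ₁` with supports inside `supp ν` there exist a displacement interpolation
`(μ_t)` (a constant-speed geodesic in the 2-Wasserstein space) and an associated optimal
transference plan `π` (disintegrated by Markov kernels `κ, κ'` over its two marginals) such
that the distorted displacement convexity inequality holds for every `U ∈ DC_N`. -/
def WeakCD [MeasurableSpace X] (d : X → X → ℝ) (ν : Measure X) (K N : ℝ) : Prop :=
  ∀ μ₀ μ₁ : Measure X, IsProbabilityMeasure μ₀ → IsProbabilityMeasure μ₁ →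
    (∃ C₀ : Set X, @IsCompact X (fwdTop d) C₀ ∧ μ₀ C₀ᶜ = 0) →
    (∃ C₁ : Set X, @IsCompact X (fwdTop d) C₁ ∧ μ₁ C₁ᶜ = 0) →
    msupport d μ₀ ⊆ msupport d ν → msupport d μ₁ ⊆ msupport d ν →
    ∃ (μ : ℝ → Measure X) (π : Measure (X × X)) (κ κ' : ProbabilityTheory.Kernel X X),
      μ 0 = μ₀ ∧ μ 1 = μ₁ ∧ (∀ t ∈ Set.Icc (0:ℝ) 1, IsProbabilityMeasure (μ t)) ∧
      (∀ s t : ℝ, 0 ≤ s → s ≤ t → t ≤ 1 →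
        wassDist d 2 (μ s) (μ t) = ENNReal.ofReal (t - s) * wassDist d 2 μ₀ μ₁) ∧
      IsOptimalCoupling d π μ₀ μ₁ ∧
      ProbabilityTheory.IsMarkovKernel κ ∧ ProbabilityTheory.IsMarkovKernel κ' ∧
      π = MeasureTheory.Measure.compProd μ₀ κ ∧
      π.map Prod.swap = MeasureTheory.Measure.compProd μ₁ κ' ∧
      ∀ U : ℝ → ℝ, MemDCN N U → ∀ t ∈ Set.Icc (0:ℝ) 1,
        Unu U ν (μ t) ≤
          ((1 - t : ℝ) : EReal) *
              Ubeta U (fun x y => betaKN K N (1 - t) (d x y)) κ ν μ₀ +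
            ((t : ℝ) : EReal) *
              Ubeta U (fun y x => betaKN K N t (d x y)) κ' ν μ₁

open ProbabilityTheory

/-!
Suppose `x, y ∈ supp ν` with `d x y > π √((N - 1) / K)`. Let `μ₀` be `ν` conditioned on a set
`A` of finite positive measure inside a small forward ball around `x`, and transport it onto `δ_y`.
Every pair `(a, y)` of the plan is farther apart than `π √((N - 1) / K)`, so `β^{(K,N)}_1 = ∞`
on it; for `U(r) = -r^(1 - 1/N)`, whose slope at `0⁺` is `-∞`, the distorted functional
`U^β_{π,ν}(μ₀)` is therefore `-∞`. The `CD(K,N)` inequality at `t = 0` then forces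
`U_ν(μ₀) = -∞`, whereas in fact `U_ν(μ₀) = -ν(A)^(1/N)`.
-/

section ForwardTopology

variable {d : X → X → ℝ}

lemma isOpen_fwdBall (d : X → X → ℝ) (x : X) (r : ℝ) : IsOpen[fwdTop d] (fwdBall d x r) :=
  TopologicalSpace.isOpen_generateFrom_of_mem ⟨x, r, rfl⟩

lemma IsIrrevMetric.mem_fwdBall_self (hd : IsIrrevMetric d) (x : X) {r : ℝ} (hr : 0 < r) :
    x ∈ fwdBall d x r := by
  simpa [fwdBall, (hd.2.1 x x).mpr rfl] using hr

lemma IsIrrevMetric.iInter_fwdBall (hd : IsIrrevMetric d) (x : X) :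
    ⋂ n : ℕ, fwdBall d x (1 / (n + 1)) = {x} := by
  refine Subset.antisymm (fun y hy => ?_) fun y hy => ?_
  · refine ((hd.2.1 x y).mp (le_antisymm (le_of_forall_gt fun ε hε => ?_) (hd.1 x y))).symm
    obtain ⟨n, hn⟩ := exists_nat_one_div_lt hε
    exact (mem_iInter.mp hy n).trans hn
  · rw [mem_singleton_iff.mp hy]
    exact mem_iInter.mpr fun n => hd.mem_fwdBall_self x (by positivity)

lemma IsIrrevMetric.measurableSingletonClass [MeasurableSpace X] (hd : IsIrrevMetric d)
    (hopen : ∀ s, IsOpen[fwdTop d] s → MeasurableSet s) : MeasurableSingletonClass X :=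
  ⟨fun x => hd.iInter_fwdBall x ▸ .iInter fun _ => hopen _ (isOpen_fwdBall d x _)⟩

lemma msupport_mono_of_absolutelyContinuous [MeasurableSpace X] {μ ν : Measure X}
    (h : μ ≪ ν) : msupport d μ ⊆ msupport d ν :=
  fun _ hx U hU hxU => pos_of_ne_zero fun hνU => (hx U hU hxU).ne' (h hνU)

lemma msupport_dirac_subset [MeasurableSpace X] [MeasurableSingletonClass X] {ν : Measure X}
    {y : X} (hy : y ∈ msupport d ν) : msupport d (Measure.dirac y) ⊆ msupport d ν := by
  intro _ hx U hU hxU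
  have hyU : y ∈ U := by
    by_contra hyU
    simpa [Measure.dirac_apply, hyU] using hx U hU hxU
  exact hy U hU hyU

lemma exists_isCompact_measure_compl_eq_zero [MeasurableSpace X]
    (hbc : ∀ x r, @IsCompact X (fwdTop d) (@closure X (fwdTop d) (fwdBall d x r)))
    {μ : Measure X} {x : X} {r : ℝ} (h : μ (fwdBall d x r)ᶜ = 0) :
    ∃ C : Set X, @IsCompact X (fwdTop d) C ∧ μ Cᶜ = 0 :=
  ⟨_, hbc x r, measure_mono_null (compl_subset_compl.mpr (@subset_closure _ (fwdTop d) _)) h⟩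

end ForwardTopology

lemma elint_eq_bot {α : Type*} [MeasurableSpace α] {μ : Measure α} {f : α → EReal}
    (h : ∫⁻ a, eposPart (-f a) ∂μ = ⊤) : elint μ f = ⊥ := by
  rw [elint, h, EReal.coe_ennreal_top, EReal.sub_top]

lemma elint_ne_bot {α : Type*} [MeasurableSpace α] {μ : Measure α} {f : α → EReal}
    (h : ∫⁻ a, eposPart (-f a) ∂μ ≠ ⊤) : elint μ f ≠ ⊥ := by
  rw [elint, Ne, sub_eq_add_neg, EReal.add_eq_bot_iff, not_or, EReal.neg_eq_bot_iff,
    EReal.coe_ennreal_eq_top_iff]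
  exact ⟨EReal.coe_ennreal_ne_bot _, h⟩

lemma slopeZero_neg_rpow {p : ℝ} (hp : p < 1) : slopeZero (fun r => -r ^ p) = ⊥ := by
  have hslope : ∀ r : ℝ, 0 < r → -r ^ p / r = -r ^ (p - 1) := fun r hr => by
    rw [neg_div, Real.rpow_sub_one hr.ne']
  have hdiv : Tendsto (fun r : ℝ => -r ^ (p - 1)) (𝓝[>] 0) atBot :=
    tendsto_neg_atTop_atBot.comp (tendsto_rpow_neg_nhdsGT_zero (by linarith))
  refine iInf_eq_bot.mpr fun b hb => ?_
  obtain ⟨q, -, hqb⟩ := EReal.lt_iff_exists_real_btwn.mp hb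
  obtain ⟨r, hrq, hr⟩ :=
    ((hdiv.eventually_lt_atBot q).and self_mem_nhdsWithin).exists
  exact ⟨⟨r, hr⟩, by rw [hslope r hr]; exact (EReal.coe_lt_coe_iff.mpr hrq).trans hqb⟩

lemma memDCN_neg_rpow {N : ℝ} (hN : 1 < N) : MemDCN N (fun r => -r ^ (1 - 1 / N)) := by
  have hinv : 0 < 1 / N ∧ 1 / N < 1 :=
    ⟨one_div_pos.mpr (by linarith), (div_lt_one (by linarith)).mpr hN⟩
  have hp0 : 0 < 1 - 1 / N := by linarith
  have hp1 : 1 - 1 / N < 1 := by linarith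
  have hscale : ∀ δ ∈ Ioi (0 : ℝ), δ ^ N * -(δ ^ (-N)) ^ (1 - 1 / N) = -δ := fun δ hδ => by
    rw [← Real.rpow_mul (le_of_lt hδ), mul_neg, ← Real.rpow_add hδ]
    field_simp
    ring_nf
    simp
  refine ⟨(Real.continuous_rpow_const hp0.le).neg.continuousOn,
    (Real.strictConcaveOn_rpow hp0 hp1).concaveOn.neg,
    by simp only [Real.zero_rpow hp0.ne', neg_zero],
    fun z hz => (Real.contDiffAt_rpow_const_of_ne (ne_of_gt hz)).neg.contDiffWithinAt, ?_⟩
  exact (concaveOn_id (convex_Ioi 0)).neg.congr fun δ hδ => (hscale δ hδ).symm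

lemma ae_ae_eq_of_map_snd_compProd_eq_dirac {α β : Type*} [MeasurableSpace α]
    [MeasurableSpace β] [MeasurableSingletonClass β] {μ : Measure α} [SFinite μ]
    {κ : Kernel α β} [IsSFiniteKernel κ] {y : β}
    (h : (μ ⊗ₘ κ).map Prod.snd = Measure.dirac y) : ∀ᵐ x ∂μ, ∀ᵐ z ∂κ x, z = y := by
  refine Measure.ae_ae_of_ae_compProd (p := fun p => p.2 = y)
    (ae_of_ae_map (p := fun z => z = y) measurable_snd.aemeasurable ?_)
  rw [h, ae_dirac_eq]
  exact eventually_pure.mpr rfl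

lemma rnDeriv_cond [MeasurableSpace X] {ν : Measure X} [SigmaFinite ν] {A : Set X}
    (hA : MeasurableSet A) (hA0 : ν A ≠ 0) :
    ν[|A].rnDeriv ν =ᵐ[ν] A.indicator fun _ => (ν A)⁻¹ := by
  filter_upwards [Measure.rnDeriv_smul_left_of_ne_top' (ν.restrict A) ν
    (ENNReal.inv_ne_top.mpr hA0), Measure.rnDeriv_restrict_self ν hA] with x hsmul hrestrict
  rw [ProbabilityTheory.cond, hsmul, Pi.smul_apply, hrestrict]
  by_cases hx : x ∈ A <;> simp [hx]

lemma Unu_cond_ne_bot [MeasurableSpace X] {U : ℝ → ℝ} (hU : U 0 = 0) {ν : Measure X}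
    [SigmaFinite ν] {A : Set X} (hA : MeasurableSet A) (hA0 : ν A ≠ 0) (hAtop : ν A ≠ ⊤) :
    Unu U ν ν[|A] ≠ ⊥ := by
  have hneg : (fun x => eposPart (-((U (ν[|A].rnDeriv ν x).toReal : ℝ) : EReal))) =ᵐ[ν]
      A.indicator fun _ => ENNReal.ofReal (-U (ν A)⁻¹.toReal) := by
    filter_upwards [rnDeriv_cond hA hA0] with x hx
    by_cases hxA : x ∈ A <;> simp [hx, hxA, eposPart, ← EReal.coe_neg, hU]
  rw [Unu, Measure.singularPart_eq_zero_of_ac cond_absolutelyContinuous]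
  simp only [Measure.coe_zero, Pi.zero_apply, EReal.coe_ennreal_zero, mul_zero, add_zero]
  refine elint_ne_bot ?_
  rw [lintegral_congr_ae hneg, lintegral_indicator hA, setLIntegral_const]
  exact ENNReal.mul_ne_top ENNReal.ofReal_ne_top hAtop

lemma Ubeta_eq_bot_of_ae_eq_top [MeasurableSpace X] {U : ℝ → ℝ} (hU : slopeZero U = ⊥)
    {β : X → X → ℝ≥0∞} {κ : Kernel X X} [IsMarkovKernel κ] {ν μ : Measure X} [SigmaFinite ν]
    [SigmaFinite μ] (hμν : μ ≪ ν) (hμ : μ ≠ 0) (hβ : ∀ᵐ x ∂μ, ∀ᵐ y ∂κ x, β x y = ⊤) :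
    Ubeta U β κ ν μ = ⊥ := by
  set inner : X → EReal := fun x => elint (κ x) fun y => distInt U (μ.rnDeriv ν x).toReal (β x y)
  have hinner : ∀ᵐ x ∂ν.withDensity (μ.rnDeriv ν), inner x = ⊥ := by
    rw [Measure.withDensity_rnDeriv_eq μ ν hμν]
    filter_upwards [hβ, Measure.rnDeriv_pos hμν, hμν.ae_le (Measure.rnDeriv_lt_top μ ν)]
      with x hβx hpos hfin
    have hρ : (0 : EReal) < (μ.rnDeriv ν x).toReal :=
      EReal.coe_pos.mpr (ENNReal.toReal_pos hpos.ne' hfin.ne)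
    refine elint_eq_bot ?_
    rw [lintegral_congr_ae (g := fun _ => ⊤) (hβx.mono fun y hy => ?_)]
    · simp
    · simp [hy, distInt, hU, EReal.bot_mul_of_pos hρ, eposPart]
  have hlower : ∀ᵐ x ∂ν, ⊤ * μ.rnDeriv ν x ≤ eposPart (-inner x) := by
    filter_upwards [(ae_withDensity_iff (Measure.measurable_rnDeriv μ ν)).mp hinner] with x hx
    by_cases h0 : μ.rnDeriv ν x = 0
    · simp [h0]
    · simp [hx h0, eposPart]
  have htop : ∫⁻ x, eposPart (-inner x) ∂ν = ⊤ := by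
    refine top_le_iff.mp ?_
    calc ⊤ = ⊤ * μ univ := (ENNReal.top_mul (Measure.measure_univ_ne_zero.mpr hμ)).symm
      _ = ∫⁻ x, ⊤ * μ.rnDeriv ν x ∂ν := by
        rw [lintegral_const_mul _ (Measure.measurable_rnDeriv μ ν), Measure.lintegral_rnDeriv hμν]
      _ ≤ _ := lintegral_mono_ae hlower
  rw [Ubeta, elint_eq_bot htop, Measure.singularPart_eq_zero_of_ac hμν]
  simp

lemma betaKN_eq_top {K N t r : ℝ} (ht : t ≠ 0) (hK : 0 < K) (hN : 1 < N)
    (hr : Real.pi * Real.sqrt ((N - 1) / K) ≤ r) : betaKN K N t r = ⊤ := by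
  have hpos : 0 < Real.pi * Real.sqrt ((N - 1) / K) :=
    mul_pos Real.pi_pos (Real.sqrt_pos.mpr (div_pos (sub_pos.mpr hN) hK))
  rw [betaKN, if_neg (not_or.mpr ⟨ht, (hpos.trans_le hr).ne'⟩), if_pos ⟨hK, hr⟩]

lemma WeakCD.exists_kernel_Unu_le [MeasurableSpace X] {d : X → X → ℝ} {ν : Measure X}
    {K N : ℝ} (hCD : WeakCD d ν K N) {μ₀ μ₁ : Measure X} [IsProbabilityMeasure μ₀]
    [IsProbabilityMeasure μ₁] (hc₀ : ∃ C : Set X, @IsCompact X (fwdTop d) C ∧ μ₀ Cᶜ = 0)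
    (hc₁ : ∃ C : Set X, @IsCompact X (fwdTop d) C ∧ μ₁ Cᶜ = 0)
    (hs₀ : msupport d μ₀ ⊆ msupport d ν) (hs₁ : msupport d μ₁ ⊆ msupport d ν) :
    ∃ κ : Kernel X X, IsMarkovKernel κ ∧ (μ₀ ⊗ₘ κ).map Prod.snd = μ₁ ∧
      ∀ U, MemDCN N U → Unu U ν μ₀ ≤ Ubeta U (fun x y => betaKN K N 1 (d x y)) κ ν μ₀ := by
  obtain ⟨μ, π, κ, _, hμ0, -, -, -, hopt, hκ, -, hπ, -, hineq⟩ :=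
    hCD μ₀ μ₁ ‹_› ‹_› hc₀ hc₁ hs₀ hs₁
  refine ⟨κ, hκ, hπ ▸ hopt.1.2, fun U hU => ?_⟩
  simpa [hμ0] using hineq U hU 0 ⟨le_rfl, zero_le_one⟩

theorem stmt17_general [mX : MeasurableSpace X] (d : X → X → ℝ) (hd : IsIrrevMetric d)
    (hmX : mX = @borel X (fwdTop d))
    (hbc : ∀ (x : X) (r : ℝ), @IsCompact X (fwdTop d) (@closure X (fwdTop d) (fwdBall d x r)))
    (ν : Measure X) [SigmaFinite ν]
    (K N : ℝ) (hK : 0 < K) (hN : 1 < N)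
    (hCD : WeakCD d ν K N) :
    ∀ x ∈ msupport d ν, ∀ y ∈ msupport d ν,
      d x y ≤ Real.pi * Real.sqrt ((N - 1) / K) := by
  have hopen : ∀ s, IsOpen[fwdTop d] s → MeasurableSet s :=
    fun s hs => hmX ▸ MeasurableSpace.measurableSet_generateFrom hs
  have := hd.measurableSingletonClass hopen
  intro x hx y hy
  by_contra! hfar
  set ε := d x y - Real.pi * Real.sqrt ((N - 1) / K)
  obtain ⟨A, hA, hAball, hA0, hAtop⟩ := Measure.exists_subset_measure_lt_top
    (hopen _ (isOpen_fwdBall d x ε))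
    (hx _ (isOpen_fwdBall d x ε) (hd.mem_fwdBall_self x (sub_pos.mpr hfar)))
  have := cond_isProbabilityMeasure_of_finite hA0.ne' hAtop.ne
  obtain ⟨κ, hκ, hmarg, hle⟩ := hCD.exists_kernel_Unu_le (μ₀ := ν[|A]) (μ₁ := Measure.dirac y)
    (exists_isCompact_measure_compl_eq_zero hbc
      (measure_mono_null (compl_subset_compl.mpr hAball) (ae_cond_mem hA)))
    (exists_isCompact_measure_compl_eq_zero hbc (x := y) (r := 1)
      (by simp [Measure.dirac_apply, hd.mem_fwdBall_self y one_pos]))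
    (msupport_mono_of_absolutelyContinuous cond_absolutelyContinuous) (msupport_dirac_subset hy)
  have hβ : ∀ᵐ a ∂ν[|A], ∀ᵐ z ∂κ a, betaKN K N 1 (d a z) = ⊤ := by
    filter_upwards [ae_cond_mem hA, ae_ae_eq_of_map_snd_compProd_eq_dirac hmarg] with a ha hz
    filter_upwards [hz] with z rfl
    have hxa : d x a < ε := hAball ha
    exact betaKN_eq_top one_ne_zero hK hN (by linarith [hd.2.2 x a z])
  have hU := memDCN_neg_rpow hN
  have hp : 1 - 1 / N < 1 := sub_lt_self 1 (one_div_pos.mpr (zero_lt_one.trans hN))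
  have hbot := Ubeta_eq_bot_of_ae_eq_top (slopeZero_neg_rpow hp)
    cond_absolutelyContinuous (IsProbabilityMeasure.ne_zero _) hβ
  exact Unu_cond_ne_bot hU.2.2.1 hA hA0.ne' hAtop.ne (le_bot_iff.mp ((hle _ hU).trans_eq hbot))

/-- A weak `CD(K,N)` space with `K > 0` and `1 < N < ∞` has
`diam (supp ν) ≤ π √((N−1)/K)`. -/
theorem stmt17 [mX : MeasurableSpace X] (d : X → X → ℝ) (hd : IsIrrevMetric d)
    (hmX : mX = @borel X (fwdTop d))
    (hbc : ∀ (x : X) (r : ℝ), @IsCompact X (fwdTop d) (@closure X (fwdTop d) (fwdBall d x r)))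
    (hgeo : ∀ x y : X, ∃ γ : ℝ → X, (∀ s t : ℝ, 0 ≤ s → s ≤ t → t ≤ 1 →
      d (γ s) (γ t) = (t - s) * d (γ 0) (γ 1)) ∧ γ 0 = x ∧ γ 1 = y)
    (ν : Measure X) [SigmaFinite ν]
    (K N : ℝ) (hK : 0 < K) (hN : 1 < N)
    (hCD : WeakCD d ν K N) :
    ∀ x ∈ msupport d ν, ∀ y ∈ msupport d ν,
      d x y ≤ Real.pi * Real.sqrt ((N - 1) / K) :=
  stmt17_general (mX := mX) d hd hmX hbc ν K N hK hN hCD
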